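/- arXiv:hep-th/9208006 — 5 statements merged into one kernel-verified Lean document; each statement's English description precedes it below -/
import Mathlib

section
/- The 8-vertex matrix R(q) = (q+1)^{-1} · [[1,0,0,nq],[0,m,q,0],[0,q,m,0],[nq,0,0,1]] with m^2 = n^2 = 1 satisfies the quantum Yang–Baxter equation R_{12} R_{13} R_{23} = R_{23} R_{13} R_{12}, for every q ≠ -1. -/
/-!
The Yang–Baxter equation is homogeneous of degree three in `R`, so the scalar `(q + 1)⁻¹` can be
dropped. For the unnormalised matrix, the equation read off entry by entry is a family of
64 polynomial identities in `m, n, q`, which hold modulo `m ^ 2 = 1` and `n ^ 2 = 1`.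
-/

open Finset

namespace Matrix

variable {ι K : Type*} [DecidableEq ι] [CommSemiring K]

def leg12 (A : Matrix (ι × ι) (ι × ι) K) : Matrix (ι × ι × ι) (ι × ι × ι) K :=
  of fun a b => A (a.1, a.2.1) (b.1, b.2.1) * (if a.2.2 = b.2.2 then 1 else 0)

def leg13 (A : Matrix (ι × ι) (ι × ι) K) : Matrix (ι × ι × ι) (ι × ι × ι) K :=
  of fun a b => A (a.1, a.2.2) (b.1, b.2.2) * (if a.2.1 = b.2.1 then 1 else 0)

def leg23 (A : Matrix (ι × ι) (ι × ι) K) : Matrix (ι × ι × ι) (ι × ι × ι) K :=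
  of fun a b => A (a.2.1, a.2.2) (b.2.1, b.2.2) * (if a.1 = b.1 then 1 else 0)

theorem leg12_smul (c : K) (A : Matrix (ι × ι) (ι × ι) K) : leg12 (c • A) = c • leg12 A := by
  ext; simp [leg12]

theorem leg13_smul (c : K) (A : Matrix (ι × ι) (ι × ι) K) : leg13 (c • A) = c • leg13 A := by
  ext; simp [leg13]

theorem leg23_smul (c : K) (A : Matrix (ι × ι) (ι × ι) K) : leg23 (c • A) = c • leg23 A := by
  ext; simp [leg23]

variable [Fintype ι]

def IsYangBaxter (A : Matrix (ι × ι) (ι × ι) K) : Prop :=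
  leg12 A * leg13 A * leg23 A = leg23 A * leg13 A * leg12 A

theorem IsYangBaxter.smul {A : Matrix (ι × ι) (ι × ι) K} (hA : IsYangBaxter A) (c : K) :
    IsYangBaxter (c • A) := by
  unfold IsYangBaxter at *
  simp only [leg12_smul, leg13_smul, leg23_smul, Matrix.smul_mul, Matrix.mul_smul, hA]

theorem leg12_mul_leg13_mul_leg23_apply (A : Matrix (ι × ι) (ι × ι) K) (a b c d e f : ι) :
    (leg12 A * leg13 A * leg23 A) (a, b, c) (d, e, f) =
      ∑ y, ∑ w, ∑ x, A (a, b) (x, y) * A (x, c) (d, w) * A (y, w) (e, f) := by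
  simp [mul_apply, leg12, leg13, leg23, Fintype.sum_prod_type, sum_mul, ite_mul, mul_ite]

theorem leg23_mul_leg13_mul_leg12_apply (A : Matrix (ι × ι) (ι × ι) K) (a b c d e f : ι) :
    (leg23 A * leg13 A * leg12 A) (a, b, c) (d, e, f) =
      ∑ x, ∑ v, ∑ w, A (b, c) (v, w) * A (a, w) (x, f) * A (x, v) (d, e) := by
  simp [mul_apply, leg12, leg13, leg23, Fintype.sum_prod_type, sum_mul, ite_mul, mul_ite]

theorem isYangBaxter_iff (A : Matrix (ι × ι) (ι × ι) K) :
    IsYangBaxter A ↔ ∀ a b c d e f,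
      ∑ y, ∑ w, ∑ x, A (a, b) (x, y) * A (x, c) (d, w) * A (y, w) (e, f) =
        ∑ x, ∑ v, ∑ w, A (b, c) (v, w) * A (a, w) (x, f) * A (x, v) (d, e) := by
  simp only [IsYangBaxter, ← leg12_mul_leg13_mul_leg23_apply, ← leg23_mul_leg13_mul_leg12_apply]
  exact ⟨fun h a b c d e f => by rw [h], fun h => ext fun ⟨a, b, c⟩ ⟨d, e, f⟩ => h a b c d e f⟩

end Matrix

open Matrix

def eightVertex {K : Type*} [CommSemiring K] (m n q : K) :
    Matrix (Fin 2 × Fin 2) (Fin 2 × Fin 2) K :=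
  of fun s r =>
    if s = (0,0) ∧ r = (0,0) then 1
    else if s = (0,0) ∧ r = (1,1) then n * q
    else if s = (0,1) ∧ r = (0,1) then m
    else if s = (0,1) ∧ r = (1,0) then q
    else if s = (1,0) ∧ r = (0,1) then q
    else if s = (1,0) ∧ r = (1,0) then m
    else if s = (1,1) ∧ r = (0,0) then n * q
    else if s = (1,1) ∧ r = (1,1) then 1
    else 0

theorem eightVertex_isYangBaxter {K : Type*} [CommRing K] {m n : K} (hm : m ^ 2 = 1)
    (hn : n ^ 2 = 1) (q : K) : IsYangBaxter (eightVertex m n q) := by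
  rw [isYangBaxter_iff]
  simp [Fin.forall_fin_two, Fin.sum_univ_two, eightVertex]
  grind

theorem eight_vertex_qybe_general {K : Type*} [Field K] (m n q : K)
    (hm : m ^ 2 = 1) (hn : n ^ 2 = 1) :
    let R : Matrix (Fin 2 × Fin 2) (Fin 2 × Fin 2) K := fun s r =>
      (q + 1)⁻¹ *
      (if s = (0,0) ∧ r = (0,0) then 1
      else if s = (0,0) ∧ r = (1,1) then n * q
      else if s = (0,1) ∧ r = (0,1) then m
      else if s = (0,1) ∧ r = (1,0) then q
      else if s = (1,0) ∧ r = (0,1) then q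
      else if s = (1,0) ∧ r = (1,0) then m
      else if s = (1,1) ∧ r = (0,0) then n * q
      else if s = (1,1) ∧ r = (1,1) then 1
      else 0)
    let R12 : Matrix (Fin 2 × Fin 2 × Fin 2) (Fin 2 × Fin 2 × Fin 2) K :=
      fun a b => R (a.1, a.2.1) (b.1, b.2.1) * (if a.2.2 = b.2.2 then 1 else 0)
    let R13 : Matrix (Fin 2 × Fin 2 × Fin 2) (Fin 2 × Fin 2 × Fin 2) K :=
      fun a b => R (a.1, a.2.2) (b.1, b.2.2) * (if a.2.1 = b.2.1 then 1 else 0)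
    let R23 : Matrix (Fin 2 × Fin 2 × Fin 2) (Fin 2 × Fin 2 × Fin 2) K :=
      fun a b => R (a.2.1, a.2.2) (b.2.1, b.2.2) * (if a.1 = b.1 then 1 else 0)
    R12 * R13 * R23 = R23 * R13 * R12 :=
  (eightVertex_isYangBaxter hm hn q).smul (q + 1)⁻¹

/-- The 8-vertex R-matrix `R(q) = (q+1)⁻¹·[[1,0,0,nq],[0,m,q,0],[0,q,m,0],[nq,0,0,1]]`
with `m² = n² = 1` satisfies the quantum Yang–Baxter equation, for every `q ≠ -1`. -/
theorem eight_vertex_qybe {K : Type*} [Field K] [CharZero K] (m n q : K)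
    (hm : m ^ 2 = 1) (hn : n ^ 2 = 1) (hq : q ≠ -1) :
    let R : Matrix (Fin 2 × Fin 2) (Fin 2 × Fin 2) K := fun s r =>
      (q + 1)⁻¹ *
      (if s = (0,0) ∧ r = (0,0) then 1
      else if s = (0,0) ∧ r = (1,1) then n * q
      else if s = (0,1) ∧ r = (0,1) then m
      else if s = (0,1) ∧ r = (1,0) then q
      else if s = (1,0) ∧ r = (0,1) then q
      else if s = (1,0) ∧ r = (1,0) then m
      else if s = (1,1) ∧ r = (0,0) then n * q
      else if s = (1,1) ∧ r = (1,1) then 1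
      else 0)
    let R12 : Matrix (Fin 2 × Fin 2 × Fin 2) (Fin 2 × Fin 2 × Fin 2) K :=
      fun a b => R (a.1, a.2.1) (b.1, b.2.1) * (if a.2.2 = b.2.2 then 1 else 0)
    let R13 : Matrix (Fin 2 × Fin 2 × Fin 2) (Fin 2 × Fin 2 × Fin 2) K :=
      fun a b => R (a.1, a.2.2) (b.1, b.2.2) * (if a.2.1 = b.2.1 then 1 else 0)
    let R23 : Matrix (Fin 2 × Fin 2 × Fin 2) (Fin 2 × Fin 2 × Fin 2) K :=
      fun a b => R (a.2.1, a.2.2) (b.2.1, b.2.2) * (if a.1 = b.1 then 1 else 0)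
    R12 * R13 * R23 = R23 * R13 * R12 :=
  eight_vertex_qybe_general m n q hm hn
end

section
/- Let R ∈ M_n ⊗ M_n satisfy the QYBE. In the tensor product algebra of V(R_{21}) (generators v^i, relations v_2 v_1 = λ R v_1 v_2 in matrix notation, i.e. v^k v^i = λ Σ R^i_j^k_l v^j v^l) and V*(R) (generators x_i, relations x_1 x_2 = x_2 x_1 λ R, i.e. x_i x_k = λ Σ x_n x_m R^m_i^n_k), with v's commuting with x's, the elements t^i_j := v^i x_j satisfy the FRT relations R t_1 t_2 = t_2 t_1 R, i.e. Σ R^i_a^k_b v^a x_j v^b x_l = Σ v^k x_b v^i x_a R^a_j^b_l. -/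
/-- If `R` satisfies the QYBE, `λ` is invertible, and an algebra `A` contains
elements `v^i` (relations of `V(R₂₁)`: `v^k v^i = λ Σ R^i_j^k_l v^j v^l`) and
`x_i` (relations of `V*(R)`: `x_i x_k = λ Σ x_n x_m R^m_i^n_k`) with all `v`'s
commuting with all `x`'s, then `t^i_j := v^i x_j` satisfies the FRT relations
`R t₁ t₂ = t₂ t₁ R`. Here `R^i_j^k_l = R (i,k) (j,l)`. -/
theorem quantum_matrix_realization {k : Type*} [Field k] {n : ℕ}
    (R : Matrix (Fin n × Fin n) (Fin n × Fin n) k)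
    (hYB :
      let R12 : Matrix (Fin n × Fin n × Fin n) (Fin n × Fin n × Fin n) k :=
        fun a b => R (a.1, a.2.1) (b.1, b.2.1) * (if a.2.2 = b.2.2 then 1 else 0)
      let R13 : Matrix (Fin n × Fin n × Fin n) (Fin n × Fin n × Fin n) k :=
        fun a b => R (a.1, a.2.2) (b.1, b.2.2) * (if a.2.1 = b.2.1 then 1 else 0)
      let R23 : Matrix (Fin n × Fin n × Fin n) (Fin n × Fin n × Fin n) k :=
        fun a b => R (a.2.1, a.2.2) (b.2.1, b.2.2) * (if a.1 = b.1 then 1 else 0)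
      R12 * R13 * R23 = R23 * R13 * R12)
    (lam : k) (hlam : lam ≠ 0)
    {A : Type*} [Ring A] [Algebra k A]
    (v x : Fin n → A)
    (hv : ∀ i K : Fin n, v K * v i = lam • ∑ j, ∑ l, R (i, K) (j, l) • (v j * v l))
    (hx : ∀ i K : Fin n, x i * x K = lam • ∑ m, ∑ l, R (m, l) (i, K) • (x l * x m))
    (hcomm : ∀ i j : Fin n, v i * x j = x j * v i) :
    ∀ i K j l : Fin n,
      ∑ a, ∑ b, R (i, K) (a, b) • (v a * x j * (v b * x l))
        = ∑ a, ∑ b, R (a, b) (j, l) • (v K * x b * (v i * x a)) := by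

  intro i K j l
  have hterm : ∀ a b c d : Fin n, v a * x c * (v b * x d) = (v a * v b) * (x c * x d) := by
    intro a b c d
    simp only [mul_assoc]
    rw [← mul_assoc (x c), ← hcomm b c, mul_assoc]
  have hsumv : ∑ a, ∑ b, R (i, K) (a, b) • (v a * v b) = lam⁻¹ • (v K * v i) := by
    rw [hv i K, inv_smul_smul₀ hlam]
  simp only [hterm]
  calc ∑ a, ∑ b, R (i, K) (a, b) • (v a * v b * (x j * x l))
      = (∑ a, ∑ b, R (i, K) (a, b) • (v a * v b)) * (x j * x l) := by
        simp only [Finset.sum_mul, smul_mul_assoc]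
    _ = lam⁻¹ • (v K * v i * (x j * x l)) := by rw [hsumv, smul_mul_assoc]
    _ = lam⁻¹ • (v K * v i * (lam • ∑ a, ∑ b, R (a, b) (j, l) • (x b * x a))) := by
        rw [hx j l]
    _ = ∑ a, ∑ b, R (a, b) (j, l) • (v K * v i * (x b * x a)) := by
        rw [mul_smul_comm, inv_smul_smul₀ hlam, Finset.mul_sum]
        simp only [Finset.mul_sum, mul_smul_comm]
end

section
/- In the associative algebra over C(q) generated by x, y, v, w with relations x y = m y x, x² = n y², v w = m w v, v² = n w², and cross relations (1−q)·x v = v x − q w y, (1−q)·x w = m w x − n q v y, (1−q)·y v = m v y − n q w x, (1−q)·y w = w y − q v x (where m² = n² = 1, q² ≠ 1), the elements a = v x, b = v y, c = w x, d = w y mutually commute. -/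
theorem ev_expand {K : Type*} [Field K] {A : Type*} [Ring A] [Algebra K A]
    {q s : K} (hq : 1 - q ≠ 0) {p r u : A}
    (h : (1 - q) • p = r - s • u) (t : A) :
    p * t = (1 - q)⁻¹ • (r * t) - ((1 - q)⁻¹ * s) • (u * t) := by
  have h2 := congrArg (fun z => (1 - q)⁻¹ • (z * t)) h
  simp only [smul_mul_assoc, smul_smul, inv_mul_cancel₀ hq, one_smul, sub_mul, smul_sub] at h2
  rw [h2]

/-- In the 8-vertex braided tensor product algebra (generators `x, y, v, w`
with `xy = myx`, `x² = ny²`, `vw = mwv`, `v² = nw²`, and the given cross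
relations, `m² = n² = 1`, `q² ≠ 1`), the elements `a = vx`, `b = vy`,
`c = wx`, `d = wy` mutually commute. -/
theorem eight_vertex_rank_one_commute {K : Type*} [Field K] [CharZero K]
    (m n q : K) (hm : m ^ 2 = 1) (hn : n ^ 2 = 1) (hq : q ^ 2 ≠ 1)
    {A : Type*} [Ring A] [Algebra K A] (x y v w : A)
    (hxy : x * y = m • (y * x))
    (hx2 : x * x = n • (y * y))
    (hvw : v * w = m • (w * v))
    (hv2 : v * v = n • (w * w))
    (hxv : (1 - q) • (x * v) = v * x - q • (w * y))
    (hxw : (1 - q) • (x * w) = m • (w * x) - (n * q) • (v * y))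
    (hyv : (1 - q) • (y * v) = m • (v * y) - (n * q) • (w * x))
    (hyw : (1 - q) • (y * w) = w * y - q • (v * x)) :
    let a := v * x
    let b := v * y
    let c := w * x
    let d := w * y
    a * b = b * a ∧ a * c = c * a ∧ a * d = d * a ∧
      b * c = c * b ∧ b * d = d * b ∧ c * d = d * c := by
  intro a b c d
  have hq1 : (1 : K) - q ≠ 0 := fun h => hq (by rw [← sub_eq_zero.mp h]; exact one_pow 2)
  have Hxv : ∀ t : A, x * (v * t) =
      (1-q)⁻¹ • ((v * x) * t) - ((1-q)⁻¹ * q) • ((w * y) * t) := fun t => by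
    rw [← mul_assoc]; exact ev_expand hq1 hxv t
  have Hxw : ∀ t : A, x * (w * t) =
      (1-q)⁻¹ • ((m • (w * x)) * t) - ((1-q)⁻¹ * (n * q)) • ((v * y) * t) := fun t => by
    rw [← mul_assoc]; exact ev_expand hq1 hxw t
  have Hyv : ∀ t : A, y * (v * t) =
      (1-q)⁻¹ • ((m • (v * y)) * t) - ((1-q)⁻¹ * (n * q)) • ((w * x) * t) := fun t => by
    rw [← mul_assoc]; exact ev_expand hq1 hyv t
  have Hyw : ∀ t : A, y * (w * t) =
      (1-q)⁻¹ • ((w * y) * t) - ((1-q)⁻¹ * q) • ((v * x) * t) := fun t => by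
    rw [← mul_assoc]; exact ev_expand hq1 hyw t
  have Hxy : ∀ t : A, x * (y * t) = m • (y * (x * t)) := fun t => by
    rw [← mul_assoc, hxy, smul_mul_assoc, mul_assoc]
  have Hx2 : ∀ t : A, x * (x * t) = n • (y * (y * t)) := fun t => by
    rw [← mul_assoc, hx2, smul_mul_assoc, mul_assoc]
  have Hvw : ∀ t : A, v * (w * t) = m • (w * (v * t)) := fun t => by
    rw [← mul_assoc, hvw, smul_mul_assoc, mul_assoc]
  have Hv2 : ∀ t : A, v * (v * t) = n • (w * (w * t)) := fun t => by
    rw [← mul_assoc, hv2, smul_mul_assoc, mul_assoc]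
  have hm2 : m = 1 ∨ m = -1 := mul_self_eq_one_iff.mp (by rwa [pow_two] at hm)
  have hn2 : n = 1 ∨ n = -1 := mul_self_eq_one_iff.mp (by rwa [pow_two] at hn)
  refine ⟨?_, ?_, ?_, ?_, ?_, ?_⟩
  · show v * x * (v * y) = v * y * (v * x)
    simp only [mul_assoc, mul_sub, sub_mul, smul_sub, mul_smul_comm, smul_mul_assoc,
      smul_smul, Hxv, Hxw, Hyv, Hyw, Hxy, Hx2, Hvw, Hv2, hxy, hx2, hvw, hv2]
    rcases hm2 with rfl | rfl <;> rcases hn2 with rfl | rfl <;>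
      match_scalars <;> field_simp [hq1]
  · show v * x * (w * x) = w * x * (v * x)
    simp only [mul_assoc, mul_sub, sub_mul, smul_sub, mul_smul_comm, smul_mul_assoc,
      smul_smul, Hxv, Hxw, Hyv, Hyw, Hxy, Hx2, Hvw, Hv2, hxy, hx2, hvw, hv2]
    rcases hm2 with rfl | rfl <;> rcases hn2 with rfl | rfl <;>
      match_scalars <;> field_simp [hq1]
  · show v * x * (w * y) = w * y * (v * x)
    simp only [mul_assoc, mul_sub, sub_mul, smul_sub, mul_smul_comm, smul_mul_assoc,
      smul_smul, Hxv, Hxw, Hyv, Hyw, Hxy, Hx2, Hvw, Hv2, hxy, hx2, hvw, hv2]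
    rcases hm2 with rfl | rfl <;> rcases hn2 with rfl | rfl <;>
      match_scalars <;> field_simp [hq1]
  · show v * y * (w * x) = w * x * (v * y)
    simp only [mul_assoc, mul_sub, sub_mul, smul_sub, mul_smul_comm, smul_mul_assoc,
      smul_smul, Hxv, Hxw, Hyv, Hyw, Hxy, Hx2, Hvw, Hv2, hxy, hx2, hvw, hv2]
    rcases hm2 with rfl | rfl <;> rcases hn2 with rfl | rfl <;>
      match_scalars <;> field_simp [hq1]
  · show v * y * (w * y) = w * y * (v * y)
    simp only [mul_assoc, mul_sub, sub_mul, smul_sub, mul_smul_comm, smul_mul_assoc,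
      smul_smul, Hxv, Hxw, Hyv, Hyw, Hxy, Hx2, Hvw, Hv2, hxy, hx2, hvw, hv2]
    rcases hm2 with rfl | rfl <;> rcases hn2 with rfl | rfl <;>
      match_scalars <;> field_simp [hq1]
  · show w * x * (w * y) = w * y * (w * x)
    simp only [mul_assoc, mul_sub, sub_mul, smul_sub, mul_smul_comm, smul_mul_assoc,
      smul_smul, Hxv, Hxw, Hyv, Hyw, Hxy, Hx2, Hvw, Hv2, hxy, hx2, hvw, hv2]
    rcases hm2 with rfl | rfl <;> rcases hn2 with rfl | rfl <;>
      match_scalars <;> field_simp [hq1]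
end

section
/- In the algebra of the previous statement (8-vertex braided tensor product with generators x,y,v,w), setting a = vx, b = vy, c = wx, d = wy, D = d − a, B = b − mn·c, C1 = d + a, C2 = b + mn·c, one has D² = mn·B² and C1² = mn·C2²; consequently the braided determinant BDET = (1/4)(C1² − mn C2² − ((q+1)/(q−1))²(D² − mn B²)) vanishes. -/
theorem eight_vertex_key {K : Type*} [Field K] [CharZero K]
    (m n q : K) (hm : m ^ 2 = 1) (hn : n ^ 2 = 1) (hq : q ^ 2 ≠ 1)
    {A : Type*} [Ring A] [Algebra K A] (x y v w : A)
    (hxy : x * y = m • (y * x))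
    (hx2 : x * x = n • (y * y))
    (hvw : v * w = m • (w * v))
    (hv2 : v * v = n • (w * w))
    (hxv : (1 - q) • (x * v) = v * x - q • (w * y))
    (hxw : (1 - q) • (x * w) = m • (w * x) - (n * q) • (v * y))
    (hyv : (1 - q) • (y * v) = m • (v * y) - (n * q) • (w * x))
    (hyw : (1 - q) • (y * w) = w * y - q • (v * x)) :
    (w * y - v * x) ^ 2 = (m * n) • (v * y - (m * n) • (w * x)) ^ 2 ∧
    (w * y + v * x) ^ 2 = (m * n) • (v * y + (m * n) • (w * x)) ^ 2 := by
  have h1q : (1 : K) - q ≠ 0 := by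
    intro h
    apply hq
    have hq1 : q = 1 := by linear_combination -h
    rw [hq1, one_pow]
  set t := ((1 : K) - q)⁻¹ with ht
  have sol : ∀ u z : A, (1 - q) • u = z → u = t • z := by
    intro u z h
    rw [← h, smul_smul, ht, inv_mul_cancel₀ h1q, one_smul]
  have r5 := sol _ _ hxv
  have r6 := sol _ _ hxw
  have r7 := sol _ _ hyv
  have r8 := sol _ _ hyw
  have r1g : ∀ z : A, x * (y * z) = m • (y * (x * z)) := fun z => by
    rw [← mul_assoc, hxy, smul_mul_assoc, mul_assoc]
  have r2g : ∀ z : A, x * (x * z) = n • (y * (y * z)) := fun z => by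
    rw [← mul_assoc, hx2, smul_mul_assoc, mul_assoc]
  have r3g : ∀ z : A, v * (w * z) = m • (w * (v * z)) := fun z => by
    rw [← mul_assoc, hvw, smul_mul_assoc, mul_assoc]
  have r4g : ∀ z : A, v * (v * z) = n • (w * (w * z)) := fun z => by
    rw [← mul_assoc, hv2, smul_mul_assoc, mul_assoc]
  have r5g : ∀ z : A, x * (v * z) = t • (v * (x * z)) - (t * q) • (w * (y * z)) := fun z => by
    rw [← mul_assoc, r5]
    simp [smul_sub, sub_mul, smul_mul_assoc, mul_assoc, smul_smul]
  have r6g : ∀ z : A, x * (w * z) = (t * m) • (w * (x * z)) - (t * (n * q)) • (v * (y * z)) :=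
    fun z => by
    rw [← mul_assoc, r6]
    simp [smul_sub, sub_mul, smul_mul_assoc, mul_assoc, smul_smul]
  have r7g : ∀ z : A, y * (v * z) = (t * m) • (v * (y * z)) - (t * (n * q)) • (w * (x * z)) :=
    fun z => by
    rw [← mul_assoc, r7]
    simp [smul_sub, sub_mul, smul_mul_assoc, mul_assoc, smul_smul]
  have r8g : ∀ z : A, y * (w * z) = t • (w * (y * z)) - (t * q) • (v * (x * z)) := fun z => by
    rw [← mul_assoc, r8]
    simp [smul_sub, sub_mul, smul_mul_assoc, mul_assoc, smul_smul]
  have hsign : ∀ s : K, s ^ 2 = 1 → s = 1 ∨ s = -1 := by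
    intro s hs
    rcases mul_eq_zero.mp (show (s - 1) * (s + 1) = 0 by linear_combination hs) with h | h
    · left; linear_combination h
    · right; linear_combination h
  obtain rfl | rfl := hsign m hm <;> obtain rfl | rfl := hsign n hn <;>
    exact ⟨by
      simp only [sq, sub_mul, mul_sub, add_mul, mul_add, smul_mul_assoc, mul_smul_comm,
        smul_sub, smul_add, smul_smul, mul_assoc, r1g, r2g, r3g, r4g, r5g, r6g, r7g, r8g,
        hxy, hx2, hvw, hv2, r5, r6, r7, r8]
      module, by
      simp only [sq, sub_mul, mul_sub, add_mul, mul_add, smul_mul_assoc, mul_smul_comm,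
        smul_sub, smul_add, smul_smul, mul_assoc, r1g, r2g, r3g, r4g, r5g, r6g, r7g, r8g,
        hxy, hx2, hvw, hv2, r5, r6, r7, r8]
      module⟩

/-- In the 8-vertex braided tensor product algebra, with `a = vx`, `b = vy`,
`c = wx`, `d = wy`, `D = d - a`, `B = b - mn·c`, `C₁ = d + a`, `C₂ = b + mn·c`,
one has `D² = mn·B²` and `C₁² = mn·C₂²`; consequently the braided determinant
`BDET = (1/4)(C₁² - mn C₂² - ((q+1)/(q-1))²(D² - mn B²))` vanishes. -/
theorem eight_vertex_bdet_rank_one {K : Type*} [Field K] [CharZero K]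
    (m n q : K) (hm : m ^ 2 = 1) (hn : n ^ 2 = 1) (hq : q ^ 2 ≠ 1)
    {A : Type*} [Ring A] [Algebra K A] (x y v w : A)
    (hxy : x * y = m • (y * x))
    (hx2 : x * x = n • (y * y))
    (hvw : v * w = m • (w * v))
    (hv2 : v * v = n • (w * w))
    (hxv : (1 - q) • (x * v) = v * x - q • (w * y))
    (hxw : (1 - q) • (x * w) = m • (w * x) - (n * q) • (v * y))
    (hyv : (1 - q) • (y * v) = m • (v * y) - (n * q) • (w * x))
    (hyw : (1 - q) • (y * w) = w * y - q • (v * x)) :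
    let a := v * x
    let b := v * y
    let c := w * x
    let d := w * y
    let D := d - a
    let B := b - (m * n) • c
    let C1 := d + a
    let C2 := b + (m * n) • c
    D ^ 2 = (m * n) • B ^ 2 ∧ C1 ^ 2 = (m * n) • C2 ^ 2 ∧
      ((1 : K) / 4) • (C1 ^ 2 - (m * n) • C2 ^ 2
        - (((q + 1) / (q - 1)) ^ 2) • (D ^ 2 - (m * n) • B ^ 2)) = 0 := by
  intro a b c d D B C1 C2
  obtain ⟨h1, h2⟩ := eight_vertex_key m n q hm hn hq x y v w hxy hx2 hvw hv2 hxv hxw hyv hyw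
  refine ⟨h1, h2, ?_⟩
  show ((1 : K) / 4) • ((w * y + v * x) ^ 2 - (m * n) • (v * y + (m * n) • (w * x)) ^ 2
      - (((q + 1) / (q - 1)) ^ 2) • ((w * y - v * x) ^ 2
        - (m * n) • (v * y - (m * n) • (w * x)) ^ 2)) = 0
  rw [h1, h2]
  simp
end

section
/- For the standard SL_q(2) R-matrix (entries R^1_1^1_1=R^2_2^2_2=1, R^1_2^1_2=R^2_1^2_1=q^{-1}, R^1_2^2_1=1−q^{-2}), in the braided matrix algebra B(R) generated by a,b,c,d = entries of u with relations R_{21} u_1 R_{12} u_2 = u_2 R_{21} u_1 R_{12}, the element q^{-2} a + d is central: it commutes with a, b, c, and d. -/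
/-!
Five entries of the matrix relation are the commutation relations of `BM_q(2)`:
`ab = q⁻²ba`, `ca = q⁻²ac`, `da = ad`, `db = bd + (1 - q⁻²)ab` and `dc = cd - (1 - q⁻²)ca`.
Given these, `q⁻²a + d` commutes with every generator: for instance
`[q⁻²a + d, b] = q⁻²(ab - ba) + (1 - q⁻²)ab = 0` because `q⁻²ba = ab`.
-/

namespace BraidedMatrix

section Legs

variable {ι α : Type*}

def swapLegs (M : Matrix (ι × ι) (ι × ι) α) : Matrix (ι × ι) (ι × ι) α :=
  fun p r => M p.swap r.swap

def leg₁ [DecidableEq ι] [Zero α] (u : Matrix ι ι α) : Matrix (ι × ι) (ι × ι) α :=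
  fun p r => if p.2 = r.2 then u p.1 r.1 else 0

def leg₂ [DecidableEq ι] [Zero α] (u : Matrix ι ι α) : Matrix (ι × ι) (ι × ι) α :=
  fun p r => if p.1 = r.1 then u p.2 r.2 else 0

def BraidedRelation [Fintype ι] [DecidableEq ι] [Semiring α]
    (R : Matrix (ι × ι) (ι × ι) α) (u : Matrix ι ι α) : Prop :=
  swapLegs R * leg₁ u * R * leg₂ u = leg₂ u * swapLegs R * leg₁ u * R

end Legs

structure SLq2Relations {K A : Type*} [CommRing K] [Ring A] [Algebra K A]
    (r : K) (a b c d : A) : Prop where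
  ab : a * b = r • (b * a)
  ca : c * a = r • (a * c)
  da : d * a = a * d
  db : d * b = b * d + (1 - r) • (a * b)
  dc : d * c = c * d - (1 - r) • (c * a)

namespace SLq2Relations

variable {K A : Type*} [CommRing K] [Ring A] [Algebra K A] {r : K} {a b c d : A}

theorem commute_trace_a (h : SLq2Relations r a b c d) : Commute (r • a + d) a := by
  simp only [Commute, SemiconjBy, add_mul, mul_add, smul_mul_assoc, mul_smul_comm, h.da]

theorem commute_trace_b (h : SLq2Relations r a b c d) : Commute (r • a + d) b := by
  simp only [Commute, SemiconjBy, add_mul, mul_add, smul_mul_assoc, mul_smul_comm, h.db, h.ab]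
  module

theorem commute_trace_c (h : SLq2Relations r a b c d) : Commute (r • a + d) c := by
  simp only [Commute, SemiconjBy, add_mul, mul_add, smul_mul_assoc, mul_smul_comm, h.dc, h.ca]
  module

theorem commute_trace_d (h : SLq2Relations r a b c d) : Commute (r • a + d) d := by
  simp only [Commute, SemiconjBy, add_mul, mul_add, smul_mul_assoc, mul_smul_comm, h.da]

end SLq2Relations

variable {K A : Type*} [Field K] [Ring A] [Algebra K A]

def rMatrix (q : K) : Matrix (Fin 2 × Fin 2) (Fin 2 × Fin 2) K := fun s r =>
  if s = (0,0) ∧ r = (0,0) then 1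
  else if s = (1,1) ∧ r = (1,1) then 1
  else if s = (0,1) ∧ r = (0,1) then q⁻¹
  else if s = (1,0) ∧ r = (1,0) then q⁻¹
  else if s = (0,1) ∧ r = (1,0) then 1 - q⁻¹ ^ 2
  else 0

theorem BraidedRelation.slq2Relations {q : K} (hq : q ≠ 0) {a b c d : A}
    (h : BraidedRelation ((rMatrix q).map (algebraMap K A)) !![a, b; c, d]) :
    SLq2Relations (q⁻¹ ^ 2) a b c d := by
  have entry (p r) := congrFun₂ h p r
  have hab := entry (0, 0) (0, 1)
  have hca := entry (0, 1) (0, 0)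
  have hda := entry (0, 1) (0, 1)
  have hdb := entry (0, 1) (1, 1)
  have hdc := entry (1, 1) (0, 1)
  simp only [Fin.isValue, Matrix.mul_apply, swapLegs, Prod.swap_prod_mk, Matrix.map_apply, rMatrix,
    Prod.ext_iff, Prod.fst_swap, Prod.snd_swap, true_and, zero_ne_one, and_self, false_and, ↓reduceIte,
    and_false, and_true, MonoidWithZeroHom.map_ite_one_zero, leg₁, Matrix.of_apply, Matrix.cons_val',
    Matrix.cons_val_fin_one, mul_ite, ite_mul, one_mul, zero_mul, mul_zero, Fintype.sum_prod_type,
    Finset.sum_ite_eq', Finset.mem_univ, Fin.sum_univ_two, Matrix.cons_val_zero, one_ne_zero, add_zero,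
    inv_pow, ← Algebra.commutes, ← Algebra.smul_def, ite_smul, one_smul, zero_smul, Matrix.cons_val_one,
    leg₂, Finset.sum_ite_irrel, Finset.sum_const_zero, Finset.sum_ite_eq, zero_add,
    Algebra.smul_mul_assoc, smul_smul, Algebra.mul_smul_comm, smul_ite, smul_zero, mul_one, smul_add]
    at hab hca hda hdb hdc
  have hq' : q⁻¹ ≠ 0 := inv_ne_zero hq
  rw [← sq] at hab hca hda
  rw [mul_smul, ← smul_add, smul_right_inj hq', ← inv_pow] at hdb
  rw [mul_smul, ← smul_add, smul_right_inj hq', ← inv_pow] at hdc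
  exact ⟨hab, hca.symm, ((smul_right_inj (pow_ne_zero 2 hq')).1 hda).symm, by rw [← hdb]; abel,
    by rw [hdc]; abel⟩

end BraidedMatrix

theorem slq2_braided_trace_central_general {K : Type*} [Field K]
    (q : K) (hq : q ≠ 0)
    {A : Type*} [Ring A] [Algebra K A] (a b c d : A) :
    let R : Matrix (Fin 2 × Fin 2) (Fin 2 × Fin 2) K := fun s r =>
      if s = (0,0) ∧ r = (0,0) then 1
      else if s = (1,1) ∧ r = (1,1) then 1
      else if s = (0,1) ∧ r = (0,1) then q⁻¹
      else if s = (1,0) ∧ r = (1,0) then q⁻¹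
      else if s = (0,1) ∧ r = (1,0) then 1 - q⁻¹ ^ 2
      else 0
    let RA : Matrix (Fin 2 × Fin 2) (Fin 2 × Fin 2) A := R.map (algebraMap K A)
    let R21 : Matrix (Fin 2 × Fin 2) (Fin 2 × Fin 2) A :=
      fun p r => RA (p.2, p.1) (r.2, r.1)
    let u : Matrix (Fin 2) (Fin 2) A := !![a, b; c, d]
    let U1 : Matrix (Fin 2 × Fin 2) (Fin 2 × Fin 2) A :=
      fun p r => if p.2 = r.2 then u p.1 r.1 else 0
    let U2 : Matrix (Fin 2 × Fin 2) (Fin 2 × Fin 2) A :=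
      fun p r => if p.1 = r.1 then u p.2 r.2 else 0
    R21 * U1 * RA * U2 = U2 * R21 * U1 * RA →
      let T := q⁻¹ ^ 2 • a + d
      T * a = a * T ∧ T * b = b * T ∧ T * c = c * T ∧ T * d = d * T := by
  intro R RA R21 u U1 U2 h T
  have rel : BraidedMatrix.SLq2Relations (q⁻¹ ^ 2) a b c d :=
    BraidedMatrix.BraidedRelation.slq2Relations hq h
  exact ⟨rel.commute_trace_a, rel.commute_trace_b, rel.commute_trace_c, rel.commute_trace_d⟩

/-- For the standard `SL_q(2)` R-matrix, in the braided matrix algebra `B(R)`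
(relations `R₂₁u₁R₁₂u₂ = u₂R₂₁u₁R₁₂` with `u = [[a,b],[c,d]]`), the quantum
trace `q⁻²a + d` is central: it commutes with `a`, `b`, `c` and `d`. -/
theorem slq2_braided_trace_central {K : Type*} [Field K]
    (q : K) (hq : q ≠ 0) (hq2 : q ^ 2 ≠ 1)
    {A : Type*} [Ring A] [Algebra K A] (a b c d : A) :
    let R : Matrix (Fin 2 × Fin 2) (Fin 2 × Fin 2) K := fun s r =>
      if s = (0,0) ∧ r = (0,0) then 1
      else if s = (1,1) ∧ r = (1,1) then 1
      else if s = (0,1) ∧ r = (0,1) then q⁻¹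
      else if s = (1,0) ∧ r = (1,0) then q⁻¹
      else if s = (0,1) ∧ r = (1,0) then 1 - q⁻¹ ^ 2
      else 0
    let RA : Matrix (Fin 2 × Fin 2) (Fin 2 × Fin 2) A := R.map (algebraMap K A)
    let R21 : Matrix (Fin 2 × Fin 2) (Fin 2 × Fin 2) A :=
      fun p r => RA (p.2, p.1) (r.2, r.1)
    let u : Matrix (Fin 2) (Fin 2) A := !![a, b; c, d]
    let U1 : Matrix (Fin 2 × Fin 2) (Fin 2 × Fin 2) A :=
      fun p r => if p.2 = r.2 then u p.1 r.1 else 0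
    let U2 : Matrix (Fin 2 × Fin 2) (Fin 2 × Fin 2) A :=
      fun p r => if p.1 = r.1 then u p.2 r.2 else 0
    R21 * U1 * RA * U2 = U2 * R21 * U1 * RA →
      let T := q⁻¹ ^ 2 • a + d
      T * a = a * T ∧ T * b = b * T ∧ T * c = c * T ∧ T * d = d * T :=
  slq2_braided_trace_central_general q hq a b c d
end
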